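/- arXiv:2105.08654 — 2 statements merged into one kernel-verified Lean document; each statement's English description precedes it below -/
import Mathlib

section
/- Let $F: \mathcal{U} \to \mathcal{V}$ be a complex box mapping satisfying the no permutation condition (for each component $U$ of $\mathcal{U}$ there exists $n\ge 0$ with $F^n(U)\setminus\mathcal{U}\neq\emptyset$). Then for any nested sequence of puzzle pieces $P_1 \supset P_2 \supset \dots$ (components of $F^{-n}(\mathcal{V})$ of increasing depth), the intersection $\bigcap_i P_i$ is compactly contained in $\mathcal{V}$; in particular each connected component of the non-escaping set $K(F) = \bigcap_{n\ge0} F^{-n}(\mathcal{V})$ is compact. -/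
open Set Topology Filter MeasureTheory

noncomputable section

structure ComplexBoxMapping : Type where
  U : Set ℂ
  V : Set ℂ
  F : ℂ → ℂ
  isOpen_U : IsOpen U
  isOpen_V : IsOpen V
  subset_UV : U ⊆ V
  mapsTo : Set.MapsTo F U V
  holo : DifferentiableOn ℂ F U
  crit_finite : {z | z ∈ U ∧ deriv F z = 0}.Finite
  components_V_finite : {C | ∃ x ∈ V, C = connectedComponentIn V x}.Finite
  components_V_simplyConnected : ∀ x ∈ V, SimplyConnectedSpace (connectedComponentIn V x)
  components_V_disjoint_closures : ∀ x ∈ V, ∀ y ∈ V,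
      connectedComponentIn V x ≠ connectedComponentIn V y →
      closure (connectedComponentIn V x) ∩ closure (connectedComponentIn V y) = ∅
  components_U_simplyConnected : ∀ x ∈ U, SimplyConnectedSpace (connectedComponentIn U x)
  components_U : ∀ x ∈ U,
      connectedComponentIn U x = connectedComponentIn V x ∨
      (IsCompact (closure (connectedComponentIn U x)) ∧
        closure (connectedComponentIn U x) ⊆ connectedComponentIn V x)
  components_U_disjoint_closures : ∀ x ∈ U, ∀ y ∈ U,
      connectedComponentIn U x ≠ connectedComponentIn U y →
      closure (connectedComponentIn U x) ∩ closure (connectedComponentIn U y) = ∅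
  maps_components : ∀ x ∈ U, F '' connectedComponentIn U x = connectedComponentIn V (F x)
  proper_components : ∀ x ∈ U, ∀ K, K ⊆ connectedComponentIn V (F x) → IsCompact K →
      IsCompact (connectedComponentIn U x ∩ F ⁻¹' K)

namespace ComplexBoxMapping

/-- The set of points whose first `n` iterates remain in the domain and whose
`n`-th iterate lies in `V`; the puzzle pieces of depth `n` are its connected components. -/
def stays (B : ComplexBoxMapping) (n : ℕ) : Set ℂ :=
  {z | (∀ k < n, B.F^[k] z ∈ B.U) ∧ B.F^[n] z ∈ B.V}

/-- `P` is a puzzle piece of depth `n`: a connected component of `F^{-n}(V)`. -/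
def IsPuzzlePiece (B : ComplexBoxMapping) (n : ℕ) (P : Set ℂ) : Prop :=
  ∃ z ∈ B.stays n, P = connectedComponentIn (B.stays n) z

/-- The non-escaping (filled Julia) set `K(F)`. -/
def nonEscaping (B : ComplexBoxMapping) : Set ℂ := {z | ∀ n, B.F^[n] z ∈ B.U}

/-- The no permutation condition. -/
def NoPermutation (B : ComplexBoxMapping) : Prop :=
  ∀ x ∈ B.U, ∃ n, ¬ (B.F^[n] '' connectedComponentIn B.U x ⊆ B.U)

end ComplexBoxMapping

/-!
A puzzle piece of depth `n` is either compactly contained in `V` or a whole component of `V`: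
pulling back along `F`, a piece stays a full component of `V` only as long as the orbit meets
components of `U` that are themselves components of `V`; once it meets a compactly contained
component of `U`, properness of `F` keeps every further pull-back compactly contained.
If no piece of a nested sequence were compactly contained, they would all be one component of `V`
made of non-escaping points, which `F` would map onto components of `V` forever, contradicting
the no permutation condition.

For a component `C` of `K(F)`, the pieces at `x ∈ C` eventually have compact closure in `V`, and
pulling back along the orbit the closure of a deep piece lies in `F^{-k}(V)` for any given `k`.
Hence `closure C ⊆ K(F)`, so `C` is closed and contained in a compact set.
-/

def CompactlyContained {X : Type*} [TopologicalSpace X] (s t : Set X) : Prop :=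
  IsCompact (closure s) ∧ closure s ⊆ t

namespace CompactlyContained

variable {X : Type*} [TopologicalSpace X] {s s' t t' : Set X}

lemma mono_left (h : CompactlyContained s t) (hs : s' ⊆ s) : CompactlyContained s' t :=
  ⟨h.1.of_isClosed_subset isClosed_closure (closure_mono hs), (closure_mono hs).trans h.2⟩

lemma mono_right (h : CompactlyContained s t) (ht : t ⊆ t') : CompactlyContained s t' :=
  ⟨h.1, h.2.trans ht⟩

lemma of_subset_isCompact [T2Space X] {M : Set X} (hsM : s ⊆ M) (hM : IsCompact M)
    (hMt : M ⊆ t) : CompactlyContained s t :=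
  have hcl : closure s ⊆ M := closure_minimal hsM hM.isClosed
  ⟨hM.of_isClosed_subset isClosed_closure hcl, hcl.trans hMt⟩

end CompactlyContained

lemma isClosed_connectedComponentIn_of_closure_subset {X : Type*} [TopologicalSpace X]
    {s : Set X} {x : X} (hx : x ∈ s) (h : closure (connectedComponentIn s x) ⊆ s) :
    IsClosed (connectedComponentIn s x) :=
  closure_subset_iff_isClosed.1 <| isPreconnected_connectedComponentIn.closure
    |>.subset_connectedComponentIn (subset_closure (mem_connectedComponentIn hx)) h

namespace ComplexBoxMapping

variable (B : ComplexBoxMapping)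

/-- Empty when `z ∉ B.stays n`. -/
def piece (n : ℕ) (z : ℂ) : Set ℂ := connectedComponentIn (B.stays n) z

lemma stays_zero : B.stays 0 = B.V := by
  ext z; simp [stays]

lemma stays_succ (n : ℕ) : B.stays (n + 1) = B.U ∩ B.F ⁻¹' B.stays n := by
  ext z
  simp only [stays, mem_inter_iff, mem_preimage, Function.iterate_succ_apply]
  constructor
  · rintro ⟨hU, hV⟩
    exact ⟨hU 0 n.succ_pos, fun k hk => hU (k + 1) (by omega), hV⟩
  · rintro ⟨h0, hU, hV⟩
    refine ⟨fun k hk => ?_, hV⟩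
    cases k with
    | zero => exact h0
    | succ k => exact hU k (by omega)

lemma stays_succ_subset_U (n : ℕ) : B.stays (n + 1) ⊆ B.U := by
  rw [stays_succ]; exact inter_subset_left

lemma stays_subset_V : ∀ n, B.stays n ⊆ B.V
  | 0 => B.stays_zero.subset
  | n + 1 => (B.stays_succ_subset_U n).trans B.subset_UV

lemma stays_antitone : Antitone B.stays :=
  antitone_nat_of_succ_le fun n _ hz =>
    ⟨fun k hk => hz.1 k (by omega), B.subset_UV (hz.1 n n.lt_succ_self)⟩

lemma nonEscaping_eq_iInter_stays : B.nonEscaping = ⋂ n, B.stays n := by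
  ext z
  simp only [nonEscaping, mem_iInter]
  exact ⟨fun hz n => ⟨fun k _ => hz k, B.subset_UV (hz n)⟩,
    fun hz n => (hz (n + 1)).1 n n.lt_succ_self⟩

lemma nonEscaping_subset_stays (n : ℕ) : B.nonEscaping ⊆ B.stays n :=
  B.nonEscaping_eq_iInter_stays.subset.trans (iInter_subset _ n)

lemma mapsTo_nonEscaping : MapsTo B.F B.nonEscaping B.nonEscaping := fun z hz n => by
  simpa only [← Function.iterate_succ_apply] using hz (n + 1)

lemma piece_antitone {m n : ℕ} (h : m ≤ n) (z : ℂ) : B.piece n z ⊆ B.piece m z :=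
  connectedComponentIn_mono z (B.stays_antitone h)

lemma piece_subset_connectedComponentIn_V (n : ℕ) (z : ℂ) :
    B.piece n z ⊆ connectedComponentIn B.V z :=
  connectedComponentIn_mono z (B.stays_subset_V n)

lemma piece_succ_subset {n : ℕ} {y : ℂ} (hy : y ∈ B.stays (n + 1)) :
    B.piece (n + 1) y ⊆ connectedComponentIn B.U y ∩ B.F ⁻¹' B.piece n (B.F y) := by
  have hFy : B.F '' B.stays (n + 1) ⊆ B.stays n := by
    rw [stays_succ]; exact image_subset_iff.2 inter_subset_right
  have hcont : ContinuousOn B.F (B.stays (n + 1)) :=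
    B.holo.continuousOn.mono (B.stays_succ_subset_U n)
  exact fun w hw => ⟨connectedComponentIn_mono y (B.stays_succ_subset_U n) hw,
    connectedComponentIn_mono _ hFy (hcont.mapsTo_connectedComponentIn hy hw)⟩

lemma compactlyContained_piece_succ {n : ℕ} {y : ℂ} (hy : y ∈ B.stays (n + 1))
    (h : CompactlyContained (B.piece n (B.F y)) B.V) :
    CompactlyContained (B.piece (n + 1) y)
      (connectedComponentIn B.U y ∩ B.F ⁻¹' closure (B.piece n (B.F y))) := by
  rw [stays_succ] at hy
  have hK : closure (B.piece n (B.F y)) ⊆ connectedComponentIn B.V (B.F y) :=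
    isPreconnected_connectedComponentIn.closure.subset_connectedComponentIn
      (subset_closure (mem_connectedComponentIn hy.2)) h.2
  refine .of_subset_isCompact (fun w hw => ?_) (B.proper_components y hy.1 _ hK h.1) subset_rfl
  have hw' := B.piece_succ_subset (by rw [stays_succ]; exact hy) hw
  exact ⟨hw'.1, subset_closure hw'.2⟩

lemma compactlyContained_piece_or_eq (n : ℕ) {z : ℂ} (hz : z ∈ B.stays n) :
    CompactlyContained (B.piece n z) B.V ∨ B.piece n z = connectedComponentIn B.V z := by
  induction n generalizing z with
  | zero => exact .inr (by rw [piece, stays_zero])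
  | succ n ih =>
    have hzU : z ∈ B.U := B.stays_succ_subset_U n hz
    rcases B.components_U z hzU with hcomp | hcc
    · have hFz : B.F z ∈ B.stays n := by rw [stays_succ] at hz; exact hz.2
      rcases ih hFz with hcc | heq
      · exact .inl <| (B.compactlyContained_piece_succ hz hcc).mono_right <|
          inter_subset_left.trans ((connectedComponentIn_subset _ _).trans B.subset_UV)
      · refine .inr <| (B.piece_subset_connectedComponentIn_V _ z).antisymm ?_
        have himage : B.F '' connectedComponentIn B.V z ⊆ B.stays n := by
          rw [← hcomp, B.maps_components z hzU, ← heq]; exact connectedComponentIn_subset _ _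
        refine isPreconnected_connectedComponentIn.subset_connectedComponentIn
          (mem_connectedComponentIn (B.stays_subset_V _ hz)) fun w hw => ?_
        rw [stays_succ]
        exact ⟨connectedComponentIn_subset B.U z (hcomp ▸ hw), himage (mem_image_of_mem _ hw)⟩
    · have hpiece : B.piece (n + 1) z ⊆ connectedComponentIn B.U z :=
        connectedComponentIn_mono z (B.stays_succ_subset_U n)
      exact .inl <| (show CompactlyContained _ _ from hcc).mono_left hpiece
        |>.mono_right (connectedComponentIn_subset _ _)

lemma not_connectedComponentIn_V_subset_nonEscaping (hnp : B.NoPermutation) {x : ℂ}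
    (hx : x ∈ B.V) : ¬ connectedComponentIn B.V x ⊆ B.nonEscaping := by
  intro hxK
  have hxK' : x ∈ B.nonEscaping := hxK (mem_connectedComponentIn hx)
  have hstep : ∀ y ∈ B.V, connectedComponentIn B.V y ⊆ B.nonEscaping →
      B.F '' connectedComponentIn B.V y = connectedComponentIn B.V (B.F y) := by
    intro y hy hyK
    have hyU : connectedComponentIn B.V y ⊆ B.U := fun w hw => hyK hw 0
    have hUV : connectedComponentIn B.U y = connectedComponentIn B.V y :=
      (connectedComponentIn_mono y B.subset_UV).antisymm <|
        isPreconnected_connectedComponentIn.subset_connectedComponentIn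
          (mem_connectedComponentIn hy) hyU
    rw [← hUV, B.maps_components y (hyU (mem_connectedComponentIn hy))]
  have horbit : ∀ n, B.F^[n] '' connectedComponentIn B.V x = connectedComponentIn B.V (B.F^[n] x)
      ∧ connectedComponentIn B.V (B.F^[n] x) ⊆ B.nonEscaping := by
    intro n
    induction n with
    | zero => simpa using hxK
    | succ n ih =>
      have hn : B.F^[n] x ∈ B.V := B.subset_UV (hxK' n)
      have := hstep _ hn ih.2
      rw [Function.iterate_succ', image_comp, ih.1, this, Function.comp_apply, ← this]
      exact ⟨rfl, image_subset_iff.2 (ih.2.trans B.mapsTo_nonEscaping)⟩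
  obtain ⟨n, hn⟩ := hnp x (hxK' 0)
  exact hn <| (image_mono (connectedComponentIn_mono x B.subset_UV)).trans <|
    (horbit n).1 ▸ fun w hw => (horbit n).2 hw 0

lemma exists_compactlyContained_of_nested (hnp : B.NoPermutation) {P : ℕ → Set ℂ}
    {d : ℕ → ℕ} (hd : Tendsto d atTop atTop) (hP : ∀ i, B.IsPuzzlePiece (d i) (P i))
    (hnest : ∀ i, P (i + 1) ⊆ P i) : ∃ i, CompactlyContained (P i) B.V := by
  by_contra! hcc
  choose z hz hPz using hP
  have hPV : ∀ i, P i = connectedComponentIn B.V (z i) := fun i =>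
    (hPz i).trans <| (B.compactlyContained_piece_or_eq _ (hz i)).resolve_left
      fun h => hcc i (hPz i ▸ h)
  have hzP : ∀ i, z i ∈ P i := fun i => hPz i ▸ mem_connectedComponentIn (hz i)
  have hPconst : ∀ i, P i = P 0 := by
    intro i
    induction i with
    | zero => rfl
    | succ i ih =>
      have hmem : z (i + 1) ∈ connectedComponentIn B.V (z i) := hPV i ▸ hnest i (hzP (i + 1))
      rw [← ih, hPV, hPV, connectedComponentIn_eq hmem]
  refine B.not_connectedComponentIn_V_subset_nonEscaping hnp (B.stays_subset_V _ (hz 0))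
    (hPV 0 ▸ ?_)
  rw [nonEscaping_eq_iInter_stays]
  refine subset_iInter fun n => ?_
  obtain ⟨i, hi⟩ := (hd.eventually_ge_atTop n).exists
  rw [← hPconst i, hPz i]
  exact (connectedComponentIn_subset _ _).trans (B.stays_antitone hi)

lemma exists_compactlyContained_piece (hnp : B.NoPermutation) {y : ℂ}
    (hy : y ∈ B.nonEscaping) : ∃ m, CompactlyContained (B.piece m y) B.V :=
  B.exists_compactlyContained_of_nested hnp tendsto_id
    (fun i => ⟨y, B.nonEscaping_subset_stays i hy, rfl⟩)
    (fun i => B.piece_antitone i.le_succ y)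

lemma exists_closure_piece_subset_stays (hnp : B.NoPermutation) (k : ℕ) :
    ∀ y ∈ B.nonEscaping, ∃ m, closure (B.piece m y) ⊆ B.stays k := by
  induction k with
  | zero =>
    intro y hy
    obtain ⟨m, hm⟩ := B.exists_compactlyContained_piece hnp hy
    exact ⟨m, B.stays_zero ▸ hm.2⟩
  | succ k ih =>
    intro y hy
    obtain ⟨m₁, hm₁⟩ := ih _ (B.mapsTo_nonEscaping hy)
    obtain ⟨m₂, hm₂⟩ := B.exists_compactlyContained_piece hnp (B.mapsTo_nonEscaping hy)
    have hM₁ := B.piece_antitone (le_max_left m₁ m₂) (B.F y)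
    have hM₂ := B.piece_antitone (le_max_right m₁ m₂) (B.F y)
    have hyM : y ∈ B.stays (max m₁ m₂ + 1) := B.nonEscaping_subset_stays _ hy
    refine ⟨max m₁ m₂ + 1, ((B.compactlyContained_piece_succ hyM (hm₂.mono_left hM₂)).2).trans ?_⟩
    rw [stays_succ]
    exact inter_subset_inter (connectedComponentIn_subset _ _)
      (preimage_mono ((closure_mono hM₁).trans hm₁))

lemma isCompact_connectedComponentIn_nonEscaping (hnp : B.NoPermutation) {x : ℂ}
    (hx : x ∈ B.nonEscaping) : IsCompact (connectedComponentIn B.nonEscaping x) := by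
  have hpiece : ∀ n, connectedComponentIn B.nonEscaping x ⊆ B.piece n x := fun n =>
    connectedComponentIn_mono x (B.nonEscaping_subset_stays n)
  have hclosure : closure (connectedComponentIn B.nonEscaping x) ⊆ B.nonEscaping := by
    refine (subset_iInter fun k => ?_).trans B.nonEscaping_eq_iInter_stays.symm.subset
    obtain ⟨m, hm⟩ := B.exists_closure_piece_subset_stays hnp k x hx
    exact (closure_mono (hpiece m)).trans hm
  obtain ⟨m, hm⟩ := B.exists_compactlyContained_piece hnp hx
  exact hm.1.of_isClosed_subset (isClosed_connectedComponentIn_of_closure_subset hx hclosure)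
    ((hpiece m).trans subset_closure)

end ComplexBoxMapping

/-- For a complex box mapping satisfying the no permutation condition, the intersection of
any nested sequence of puzzle pieces of increasing depth is compactly contained in `𝒱`;
in particular each connected component of the non-escaping set `K(F)` is compact. -/
theorem stmt_2 (B : ComplexBoxMapping) (hnp : B.NoPermutation)
    (P : ℕ → Set ℂ) (d : ℕ → ℕ) (hd : StrictMono d)
    (hP : ∀ i, B.IsPuzzlePiece (d i) (P i))
    (hnest : ∀ i, P (i + 1) ⊆ P i) :
    (IsCompact (closure (⋂ i, P i)) ∧ closure (⋂ i, P i) ⊆ B.V) ∧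
    ∀ x ∈ B.nonEscaping, IsCompact (connectedComponentIn B.nonEscaping x) := by
  obtain ⟨i, hi⟩ := B.exists_compactlyContained_of_nested hnp hd.tendsto_atTop hP hnest
  exact ⟨hi.mono_left (iInter_subset P i),
    fun x hx => B.isCompact_connectedComponentIn_nonEscaping hnp hx⟩
end
end

section
/- There exists a complex box mapping $F_3 : \mathcal{U}_3 \to \mathcal{V}_3$ with $\mathcal{V}_3 = \mathbb{D}$ the open unit disk, each component of $\mathcal{U}_3$ compactly contained in $\mathbb{D}$, and an open disk $W = \mathbb{D}_{1/2}$ such that $F_3^n(W) \cap F_3^m(W) = \emptyset$ for all $n \neq m$; concretely, choosing real Möbius transformations $g_k : \mathbb{D}\to\mathbb{D}$ with $g_k(\mathbb{D}_{a_k})$ pairwise disjoint, $\mathcal{U}_3 = \bigcup_k g_k(\mathbb{D}_{a_k})$, and $F_3(x) = g_{k+1}(g_k^{-1}(x)/a_k)$ on $g_k(\mathbb{D}_{a_k})$ where $\prod a_i = 1/2$, one has $F_3^n(x) = g_{n+1}(x / (a_1\cdots a_n))$ for all $x \in W$ and hence $F_3^n(W) \subset g_{n+1}(\mathbb{D}_{a_{n+1}})$.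 -/
open Set Topology Filter MeasureTheory

noncomputable section

/-!
The real Möbius automorphism `φ_c z = (z + c) / (1 + c z)` of `𝔻` maps `𝔻_r` onto the disk
whose diameter is the real segment `[φ_c (-r), φ_c r]`. Choosing the parameters `c_k`
inductively so that these segments move strictly to the right, the pieces `g_k(𝔻_{a_k})` have
pairwise disjoint closures in `𝔻`, and `F = g_{k+1}((g_k⁻¹ ·) / a_k)` maps each piece
biholomorphically onto `𝔻`, which makes `F` a box mapping. Since `a_0 ⋯ a_n > 1/2`, induction
gives `F^n x = g_n (x / (a_0 ⋯ a_{n-1}))` on `W = 𝔻_{1/2}`, so `F^n(W)` lies in the `n`-th piece.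
-/

open Metric Function

section Glue

variable {ι α β : Type*}

open Classical in
def glue [Nonempty β] (s : ι → Set α) (f : ι → α → β) (z : α) : β :=
  if h : ∃ i, z ∈ s i then f h.choose z else Classical.arbitrary β

variable [Nonempty β] {s : ι → Set α} {i : ι}

theorem glue_eqOn (hs : Pairwise (Disjoint on s)) (f : ι → α → β) (i : ι) :
    EqOn (glue s f) (f i) (s i) := by
  intro z hz
  have h : ∃ j, z ∈ s j := ⟨i, hz⟩
  rw [glue, dif_pos h, hs.eq (not_disjoint_iff.2 ⟨z, h.choose_spec, hz⟩)]

theorem glue_eventuallyEq [TopologicalSpace α] (hs : Pairwise (Disjoint on s))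
    (ho : IsOpen (s i)) (f : ι → α → β) {z : α} (hz : z ∈ s i) :
    glue s f =ᶠ[𝓝 z] f i :=
  Filter.eventuallyEq_of_mem (ho.mem_nhds hz) (glue_eqOn hs f i)

theorem mapsTo_glue (hs : Pairwise (Disjoint on s)) {f : ι → α → β} {t : Set β}
    (hf : ∀ i, MapsTo (f i) (s i) t) : MapsTo (glue s f) (⋃ i, s i) t := by
  intro z hz
  obtain ⟨i, hi⟩ := mem_iUnion.1 hz
  exact glue_eqOn hs f i hi ▸ hf i hi

theorem differentiableOn_glue {𝕜 E : Type*} [NontriviallyNormedField 𝕜]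
    [NormedAddCommGroup E] [NormedSpace 𝕜 E] {s : ι → Set 𝕜} (hs : Pairwise (Disjoint on s))
    (ho : ∀ i, IsOpen (s i)) {f : ι → 𝕜 → E} (hf : ∀ i, DifferentiableOn 𝕜 (f i) (s i)) :
    DifferentiableOn 𝕜 (glue s f) (⋃ i, s i) := by
  intro z hz
  obtain ⟨i, hi⟩ := mem_iUnion.1 hz
  exact ((glue_eventuallyEq hs (ho i) f hi).differentiableAt_iff.2
    ((hf i).differentiableAt ((ho i).mem_nhds hi))).differentiableWithinAt

end Glue

theorem connectedComponentIn_iUnion_eq {ι α : Type*} [TopologicalSpace α] {s : ι → Set α}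
    (hs : Pairwise (Disjoint on s)) (ho : ∀ i, IsOpen (s i)) {i : ι} (hc : IsPreconnected (s i))
    {z : α} (hz : z ∈ s i) :
    connectedComponentIn (⋃ j, s j) z = s i := by
  refine Subset.antisymm ?_ (hc.subset_connectedComponentIn hz (subset_iUnion s i))
  have hcover : ⋃ j, s j ⊆ s i ∪ ⋃ j ≠ i, s j := iUnion_subset fun j => by
    rcases eq_or_ne j i with rfl | hj
    · exact subset_union_left
    · exact (subset_biUnion_of_mem (u := s) hj).trans subset_union_right
  exact isPreconnected_connectedComponentIn.subset_left_of_subset_union (ho i)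
    (isOpen_biUnion fun j _ => ho j) (disjoint_iUnion₂_right.2 fun j hj => hs (Ne.symm hj))
    ((connectedComponentIn_subset _ _).trans hcover)
    ⟨z, mem_connectedComponentIn (mem_iUnion_of_mem i hz), hz⟩

theorem Convex.simplyConnectedSpace {E : Type*} [NormedAddCommGroup E] [NormedSpace ℝ E]
    {s : Set E} (hs : Convex ℝ s) (hne : s.Nonempty) : SimplyConnectedSpace s :=
  have := hs.contractibleSpace hne
  inferInstance

theorem deriv_ne_zero_of_leftInvOn {𝕜 : Type*} [NontriviallyNormedField 𝕜]
    {f g : 𝕜 → 𝕜} {s : Set 𝕜} (hs : IsOpen s) {z : 𝕜} (hz : z ∈ s)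
    (hf : DifferentiableAt 𝕜 f z) (hg : DifferentiableAt 𝕜 g (f z)) (hinv : LeftInvOn g f s) :
    deriv f z ≠ 0 := by
  have hcomp : HasDerivAt (g ∘ f) (deriv g (f z) * deriv f z) z :=
    hg.hasDerivAt.comp z hf.hasDerivAt
  have hid : HasDerivAt (g ∘ f) 1 z :=
    (hasDerivAt_id z).congr_of_eventuallyEq (Filter.eventuallyEq_of_mem (hs.mem_nhds hz) hinv)
  exact right_ne_zero_of_mul_eq_one (hcomp.unique hid)

theorem ComplexBoxMapping.exists_of_pieces {ι : Type*} {V : Set ℂ} {D : ι → Set ℂ}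
    {f h : ι → ℂ → ℂ} (hV : IsOpen V) (hVc : Convex ℝ V) (hD : ∀ i, IsOpen (D i))
    (hDc : ∀ i, Convex ℝ (D i)) (hDcpt : ∀ i, IsCompact (closure (D i)))
    (hDV : ∀ i, closure (D i) ⊆ V) (hDdisj : Pairwise (Disjoint on fun i => closure (D i)))
    (hf : ∀ i, DifferentiableOn ℂ (f i) (D i)) (hh : ∀ i, DifferentiableOn ℂ (h i) V)
    (hfV : ∀ i, MapsTo (f i) (D i) V) (hhD : ∀ i, MapsTo (h i) V (D i))
    (hinv : ∀ i, InvOn (h i) (f i) (D i) V) :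
    ∃ B : ComplexBoxMapping, B.U = ⋃ i, D i ∧ B.V = V ∧ ∀ i, EqOn B.F (f i) (D i) := by
  have hdisj : Pairwise (Disjoint on D) := fun i j hij =>
    (hDdisj hij).mono subset_closure subset_closure
  have compU {z : ℂ} (hz : z ∈ ⋃ i, D i) :
      ∃ i, z ∈ D i ∧ connectedComponentIn (⋃ j, D j) z = D i :=
    let ⟨i, hi⟩ := mem_iUnion.1 hz
    ⟨i, hi, connectedComponentIn_iUnion_eq hdisj hD (hDc i).isPreconnected hi⟩
  have compV {z : ℂ} (hz : z ∈ V) : connectedComponentIn V z = V :=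
    hVc.isPreconnected.connectedComponentIn hz
  have hF i := glue_eqOn hdisj f i
  refine ⟨{
      U := ⋃ i, D i
      V := V
      F := glue D f
      isOpen_U := isOpen_iUnion hD
      isOpen_V := hV
      subset_UV := iUnion_subset fun i => subset_closure.trans (hDV i)
      mapsTo := mapsTo_glue hdisj hfV
      holo := differentiableOn_glue hdisj hD hf
      crit_finite := ?crit
      components_V_finite := (finite_singleton V).subset fun _ ⟨z, hz, e⟩ => e.trans (compV hz)
      components_V_simplyConnected := fun z hz => by
        rw [compV hz]
        exact hVc.simplyConnectedSpace ⟨z, hz⟩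
      components_V_disjoint_closures := fun x hx y hy hne =>
        absurd ((compV hx).trans (compV hy).symm) hne
      components_U_simplyConnected := fun z hz => by
        obtain ⟨i, hi, hcomp⟩ := compU hz
        rw [hcomp]
        exact (hDc i).simplyConnectedSpace ⟨z, hi⟩
      components_U := fun z hz => by
        obtain ⟨i, hi, hcomp⟩ := compU hz
        rw [hcomp, compV (hDV i (subset_closure hi))]
        exact Or.inr ⟨hDcpt i, hDV i⟩
      components_U_disjoint_closures := fun x hx y hy hne => by
        obtain ⟨i, -, hi⟩ := compU hx
        obtain ⟨j, -, hj⟩ := compU hy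
        rw [hi, hj] at hne ⊢
        exact (hDdisj fun hij : i = j => hne (congrArg D hij)).inter_eq
      maps_components := fun z hz => by
        obtain ⟨i, hi, hcomp⟩ := compU hz
        rw [hcomp, hF i hi, compV (hfV i hi), (hF i).image_eq]
        exact ((hinv i).bijOn (hfV i) (hhD i)).image_eq
      proper_components := fun z hz K hKV hK => by
        obtain ⟨i, hi, hcomp⟩ := compU hz
        rw [hF i hi, compV (hfV i hi)] at hKV
        rw [hcomp, (hF i).inter_preimage_eq,
          ← ((hinv i).symm.bijOn (hhD i) (hfV i)).image_eq, inter_comm,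
          ← (hinv i).2.image_inter', inter_eq_left.2 hKV]
        exact hK.image_of_continuousOn ((hh i).continuousOn.mono hKV) }, rfl, rfl, hF⟩
  convert finite_empty
  refine eq_empty_of_forall_notMem fun z ⟨hz, hz'⟩ => ?_
  obtain ⟨i, hi⟩ := mem_iUnion.1 hz
  rw [(glue_eventuallyEq hdisj (hD i) f hi).deriv_eq] at hz'
  exact deriv_ne_zero_of_leftInvOn (hD i) hi ((hf i).differentiableAt ((hD i).mem_nhds hi))
    ((hh i).differentiableAt (hV.mem_nhds (hfV i hi))) (hinv i).1 hz'

def mobius (c : ℝ) (z : ℂ) : ℂ := (z + c) / (1 + c * z)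

def realMobius (c x : ℝ) : ℝ := (x + c) / (1 + c * x)

section Mobius

variable {c : ℝ} {z : ℂ}

theorem mobius_ofReal (c x : ℝ) : mobius c x = realMobius c x := by
  simp [mobius, realMobius]

theorem im_mobius_of_im_eq_zero (c : ℝ) {y : ℂ} (hy : y.im = 0) : (mobius c y).im = 0 := by
  rw [← Complex.re_add_im y, hy, Complex.ofReal_zero, zero_mul, add_zero, mobius_ofReal]
  exact Complex.ofReal_im _

theorem mobius_zero : mobius 0 = id := by
  ext z
  simp [mobius]

theorem one_add_mul_ne_zero_of_norm_lt_one (hc : |c| ≤ 1) (hz : ‖z‖ < 1) :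
    1 + c * z ≠ 0 := by
  intro h
  have := congrArg norm (eq_neg_of_add_eq_zero_right h)
  rw [norm_mul, Complex.norm_real, norm_neg, norm_one, Real.norm_eq_abs] at this
  nlinarith [norm_nonneg z, abs_nonneg c]

theorem norm_mobius_lt_one (hc : |c| < 1) (hz : ‖z‖ < 1) : ‖mobius c z‖ < 1 := by
  have hden := one_add_mul_ne_zero_of_norm_lt_one hc.le hz
  rw [mobius, norm_div, div_lt_one (norm_pos_iff.2 hden)]
  have key : Complex.normSq (1 + c * z) - Complex.normSq (z + c) =
      (1 - c ^ 2) * (1 - Complex.normSq z) := by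
    simp only [Complex.normSq_apply, Complex.add_re, Complex.add_im, Complex.mul_re,
      Complex.mul_im, Complex.ofReal_re, Complex.ofReal_im, Complex.one_re, Complex.one_im]
    ring
  have hc2 : 0 < 1 - c ^ 2 := by nlinarith [sq_abs c, abs_nonneg c]
  have hz2 : 0 < 1 - Complex.normSq z := by
    nlinarith [Complex.sq_norm z, norm_nonneg z]
  refine lt_of_pow_lt_pow_left₀ 2 (norm_nonneg _) ?_
  rw [Complex.sq_norm, Complex.sq_norm]
  nlinarith [mul_pos hc2 hz2]

theorem mobius_neg_mobius (hc : |c| < 1) (hz : ‖z‖ < 1) : mobius (-c) (mobius c z) = z := by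
  have hden := one_add_mul_ne_zero_of_norm_lt_one hc.le hz
  have hc2 : (1 : ℂ) - c ^ 2 ≠ 0 := by
    exact_mod_cast (show (1 : ℝ) - c ^ 2 ≠ 0 by nlinarith [sq_abs c, abs_nonneg c])
  set w := mobius c z
  have hw : w * (1 + c * z) = z + c := div_mul_cancel₀ _ hden
  have hden' : (1 - c * w) * (1 + c * z) = 1 - c ^ 2 := by linear_combination (-c) * hw
  simp only [mobius, Complex.ofReal_neg, neg_mul, ← sub_eq_add_neg]
  rw [div_eq_iff (left_ne_zero_of_mul (hden' ▸ hc2))]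
  refine mul_right_cancel₀ hden ?_
  linear_combination (1 + c * z) * hw

theorem mobius_mobius_neg (hc : |c| < 1) (hz : ‖z‖ < 1) : mobius c (mobius (-c) z) = z := by
  simpa using mobius_neg_mobius (c := -c) (by rwa [abs_neg]) hz

theorem invOn_mobius (hc : |c| < 1) : InvOn (mobius (-c)) (mobius c) (ball 0 1) (ball 0 1) :=
  ⟨fun _ hz => mobius_neg_mobius hc (mem_ball_zero_iff.1 hz),
    fun _ hz => mobius_mobius_neg hc (mem_ball_zero_iff.1 hz)⟩

theorem mapsTo_mobius (hc : |c| < 1) : MapsTo (mobius c) (ball 0 1) (ball 0 1) :=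
  fun _ hz => mem_ball_zero_iff.2 (norm_mobius_lt_one hc (mem_ball_zero_iff.1 hz))

theorem bijOn_mobius (hc : |c| < 1) : BijOn (mobius c) (ball 0 1) (ball 0 1) :=
  (invOn_mobius hc).bijOn (mapsTo_mobius hc) (mapsTo_mobius (by rwa [abs_neg]))

theorem differentiableOn_mobius (hc : |c| ≤ 1) : DifferentiableOn ℂ (mobius c) (ball 0 1) := by
  intro z hz
  have : DifferentiableAt ℂ (fun w : ℂ => (w + c) / (1 + c * w)) z := .div (by fun_prop)
    (by fun_prop) (one_add_mul_ne_zero_of_norm_lt_one hc (mem_ball_zero_iff.1 hz))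
  exact this.differentiableWithinAt

end Mobius

def diameterDisk (p q : ℝ) : Set ℂ := ball (((p + q) / 2 : ℝ) : ℂ) ((q - p) / 2)

section DiameterDisk

variable {p q : ℝ}

theorem re_mem_Icc_of_mem_closure_diameterDisk {z : ℂ} (hz : z ∈ closure (diameterDisk p q)) :
    z.re ∈ Icc p q := by
  have h := closure_ball_subset_closedBall hz
  rw [mem_closedBall, Complex.dist_eq] at h
  have hre := (Complex.abs_re_le_norm _).trans h
  rw [Complex.sub_re, Complex.ofReal_re, abs_le] at hre
  constructor <;> linarith [hre.1, hre.2]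

theorem closure_diameterDisk_subset_ball (hp : -1 < p) (hq : q < 1) :
    closure (diameterDisk p q) ⊆ ball 0 1 := by
  intro z hz
  have h := closure_ball_subset_closedBall hz
  rw [mem_closedBall, Complex.dist_eq] at h
  rw [mem_ball_zero_iff]
  calc ‖z‖ ≤ ‖z - (((p + q) / 2 : ℝ) : ℂ)‖ + ‖(((p + q) / 2 : ℝ) : ℂ)‖ :=
        norm_le_norm_sub_add _ _
    _ ≤ (q - p) / 2 + |(p + q) / 2| := by rw [Complex.norm_real, Real.norm_eq_abs]; gcongr
    _ < 1 := by cases abs_cases ((p + q) / 2) <;> linarith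

theorem disjoint_closure_diameterDisk {p' q' : ℝ} (h : q < p') :
    Disjoint (closure (diameterDisk p q)) (closure (diameterDisk p' q')) :=
  Set.disjoint_left.2 fun _ hz hz' => by
    linarith [(re_mem_Icc_of_mem_closure_diameterDisk hz).2,
      (re_mem_Icc_of_mem_closure_diameterDisk hz').1]

end DiameterDisk

section MobiusImage

variable {c r : ℝ}

theorem abs_realMobius_lt_one (hc : |c| < 1) {x : ℝ} (hx : |x| < 1) : |realMobius c x| < 1 := by
  have := norm_mobius_lt_one hc (z := x) (by rwa [Complex.norm_real])
  rwa [mobius_ofReal, Complex.norm_real] at this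

theorem diameterDisk_realMobius (hc : |c| < 1) (hr : 0 < r) (hr1 : r ≤ 1) :
    diameterDisk (realMobius c (-r)) (realMobius c r) =
      ball ((c * (1 - r ^ 2) / (1 - c ^ 2 * r ^ 2) : ℝ) : ℂ)
        ((1 - c ^ 2) / (1 - c ^ 2 * r ^ 2) * r) := by
  obtain ⟨hc₁, hc₂⟩ := abs_lt.1 hc
  have hcr : 0 < 1 - c ^ 2 * r ^ 2 := by
    nlinarith [mul_le_mul_of_nonneg_left (pow_le_one₀ hr.le hr1 : r ^ 2 ≤ 1) (sq_nonneg c)]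
  have hcr₁ : 1 + c * r ≠ 0 := by nlinarith
  have hcr₂ : 1 + c * -r ≠ 0 := by nlinarith
  rw [diameterDisk, realMobius, realMobius, div_add_div _ _ hcr₂ hcr₁,
    div_sub_div _ _ hcr₁ hcr₂]
  congr 2
  · rw [div_div, div_eq_div_iff (by positivity) hcr.ne']
    ring
  · rw [div_div, div_mul_eq_mul_div, div_eq_div_iff (by positivity) hcr.ne']
    ring

theorem norm_mobius_sub_lt_iff (hc : |c| < 1) (hr : 0 < r) (hr1 : r ≤ 1) {y : ℂ}
    (hy : 1 + c * y ≠ 0) :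
    ‖mobius c y - ((c * (1 - r ^ 2) / (1 - c ^ 2 * r ^ 2) : ℝ) : ℂ)‖ <
        (1 - c ^ 2) / (1 - c ^ 2 * r ^ 2) * r ↔ ‖y‖ < r := by
  have hc2 : c ^ 2 < 1 := by nlinarith [sq_abs c, abs_nonneg c]
  have hcr : 0 < 1 - c ^ 2 * r ^ 2 := by
    nlinarith [mul_le_mul_of_nonneg_left (pow_le_one₀ hr.le hr1 : r ^ 2 ≤ 1) (sq_nonneg c)]
  set k := (1 - c ^ 2) / (1 - c ^ 2 * r ^ 2)
  have hk : 0 < k := div_pos (by linarith) hcr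
  set m := c * (1 - r ^ 2) / (1 - c ^ 2 * r ^ 2)
  have key : (mobius c y - m) * (1 + c * y) = k * (y + c * r ^ 2) := by
    rw [mobius, sub_mul, div_mul_cancel₀ _ hy]
    have hcrC : (1 : ℂ) - c ^ 2 * r ^ 2 ≠ 0 := by exact_mod_cast hcr.ne'
    push_cast [m, k]
    field_simp
    ring
  have key₂ : Complex.normSq (y + c * r ^ 2) - r ^ 2 * Complex.normSq (1 + c * y) =
      (1 - c ^ 2 * r ^ 2) * (Complex.normSq y - r ^ 2) := by
    simp only [Complex.normSq_apply, Complex.add_re, Complex.add_im, Complex.mul_re,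
      Complex.mul_im, Complex.ofReal_re, Complex.ofReal_im, Complex.one_re, Complex.one_im]
    norm_cast
    ring
  calc ‖mobius c y - m‖ < k * r
      ↔ ‖mobius c y - m‖ * ‖1 + c * y‖ < k * r * ‖1 + c * y‖ :=
        (mul_lt_mul_iff_left₀ (norm_pos_iff.2 hy)).symm
    _ ↔ k * ‖y + c * r ^ 2‖ < k * (r * ‖1 + c * y‖) := by
        rw [← norm_mul, key, norm_mul, Complex.norm_real, Real.norm_of_nonneg hk.le, mul_assoc]
    _ ↔ ‖y + c * r ^ 2‖ < r * ‖1 + c * y‖ := mul_lt_mul_iff_right₀ hk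
    _ ↔ Complex.normSq (y + c * r ^ 2) < r ^ 2 * Complex.normSq (1 + c * y) := by
        rw [← Complex.sq_norm, ← Complex.sq_norm, ← mul_pow,
          sq_lt_sq₀ (norm_nonneg _) (by positivity)]
    _ ↔ Complex.normSq y < r ^ 2 := by constructor <;> intro <;> nlinarith
    _ ↔ ‖y‖ < r := by rw [← Complex.sq_norm, sq_lt_sq₀ (norm_nonneg _) hr.le]

theorem mobius_image_ball (hc : |c| < 1) (hr : 0 < r) (hr1 : r < 1) :
    mobius c '' ball 0 r = diameterDisk (realMobius c (-r)) (realMobius c r) := by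
  have hmem (y : ℂ) (hy : ‖y‖ < 1) :
      mobius c y ∈ diameterDisk (realMobius c (-r)) (realMobius c r) ↔ ‖y‖ < r := by
    rw [diameterDisk_realMobius hc hr hr1.le, mem_ball, Complex.dist_eq]
    exact norm_mobius_sub_lt_iff hc hr hr1.le (one_add_mul_ne_zero_of_norm_lt_one hc.le hy)
  ext z
  constructor
  · rintro ⟨y, hy, rfl⟩
    have hy : ‖y‖ < r := mem_ball_zero_iff.1 hy
    exact (hmem y (hy.trans hr1)).2 hy
  · intro hz
    have hr' : |r| < 1 := by rwa [abs_of_pos hr]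
    have hz1 : ‖z‖ < 1 := mem_ball_zero_iff.1 <| closure_diameterDisk_subset_ball
      (abs_lt.1 (abs_realMobius_lt_one hc (by rwa [abs_neg]))).1
      (abs_lt.1 (abs_realMobius_lt_one hc hr')).2 (subset_closure hz)
    have hzy : mobius c (mobius (-c) z) = z := mobius_mobius_neg hc hz1
    refine ⟨mobius (-c) z, mem_ball_zero_iff.2 ?_, hzy⟩
    exact (hmem _ (norm_mobius_lt_one (by rwa [abs_neg]) hz1)).1 (by rwa [hzy])

end MobiusImage

theorem realMobius_neg_lt_realMobius {c r : ℝ} (hc : |c| < 1) (hr : 0 < r) (hr1 : r < 1) :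
    realMobius c (-r) < realMobius c r := by
  obtain ⟨hc₁, hc₂⟩ := abs_lt.1 hc
  rw [realMobius, realMobius, div_lt_div_iff₀ (by nlinarith) (by nlinarith)]
  nlinarith [mul_pos hr (show 0 < 1 - c ^ 2 by nlinarith)]

theorem lt_realMobius_neg_of_realMobius_lt {t r c : ℝ} (ht : |t| < 1) (hr : |r| < 1)
    (hc : c < 1) (h : realMobius t r < c) : t < realMobius c (-r) := by
  have hc' : -1 < c := (abs_lt.1 (abs_realMobius_lt_one ht hr)).1.trans h
  obtain ⟨ht₁, ht₂⟩ := abs_lt.1 ht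
  obtain ⟨hr₁, hr₂⟩ := abs_lt.1 hr
  rw [realMobius, div_lt_iff₀ (by nlinarith)] at h
  rw [realMobius, lt_div_iff₀ (by nlinarith)]
  nlinarith

namespace WanderingDisk

def radius (i : ℕ) : ℝ := (1 / 2 : ℝ) ^ ((1 / 2 : ℝ) ^ (i + 1))

theorem radius_pos (i : ℕ) : 0 < radius i := by
  unfold radius
  positivity

theorem radius_lt_one (i : ℕ) : radius i < 1 :=
  Real.rpow_lt_one (by norm_num) (by norm_num) (by positivity)

theorem abs_radius_lt_one (i : ℕ) : |radius i| < 1 := by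
  rw [abs_of_pos (radius_pos i)]
  exact radius_lt_one i

theorem monotone_radius : Monotone radius := fun i j hij =>
  Real.rpow_le_rpow_of_exponent_ge (by norm_num) (by norm_num)
    (pow_le_pow_of_le_one (by norm_num) (by norm_num) (by omega))

theorem tendsto_radius : Tendsto radius atTop (𝓝 1) := by
  have h : Tendsto (fun i : ℕ => (1 / 2 : ℝ) ^ (i + 1)) atTop (𝓝 0) :=
    (tendsto_pow_atTop_nhds_zero_of_lt_one (by norm_num) (by norm_num)).comp
      (tendsto_add_atTop_nat 1)
  have := (Real.continuousAt_const_rpow (a := 1 / 2) (b := 0) (by norm_num)).tendsto.comp h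
  rwa [Real.rpow_zero] at this

theorem prod_radius (n : ℕ) :
    ∏ i ∈ Finset.range n, radius i = (1 / 2 : ℝ) ^ (1 - (1 / 2 : ℝ) ^ n) := by
  induction n with
  | zero => simp
  | succ n ih =>
    rw [Finset.prod_range_succ, ih, radius, ← Real.rpow_add (by norm_num)]
    ring_nf

theorem half_lt_prod_radius (n : ℕ) : 1 / 2 < ∏ i ∈ Finset.range n, radius i := by
  rw [prod_radius]
  conv_lhs => rw [← Real.rpow_one (1 / 2 : ℝ)]
  exact Real.rpow_lt_rpow_of_exponent_gt (by norm_num) (by norm_num)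
    (by linarith [pow_pos (by norm_num : (0 : ℝ) < 1 / 2) n])

theorem tendsto_prod_radius :
    Tendsto (fun n => ∏ i ∈ Finset.range n, radius i) atTop (𝓝 (1 / 2)) := by
  simp_rw [prod_radius]
  have h : Tendsto (fun n : ℕ => 1 - (1 / 2 : ℝ) ^ n) atTop (𝓝 1) := by
    simpa using tendsto_const_nhds.sub
      (tendsto_pow_atTop_nhds_zero_of_lt_one (by norm_num : (0 : ℝ) ≤ 1 / 2) (by norm_num))
  have := (Real.continuousAt_const_rpow (a := 1 / 2) (b := 1) (by norm_num)).tendsto.comp h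
  rwa [Real.rpow_one] at this

-- Any point of `(φ_q(a_{k+1}), 1)`, with `q` the right end of piece `k`, puts piece `k + 1`
-- strictly to the right of piece `k`.
def center : ℕ → ℝ
  | 0 => 0
  | k + 1 => (realMobius (realMobius (center k) (radius k)) (radius (k + 1)) + 1) / 2

theorem abs_center_lt_one : ∀ k, |center k| < 1
  | 0 => by simp [center]
  | k + 1 => by
    have h := abs_lt.1 <| abs_realMobius_lt_one
      (abs_realMobius_lt_one (abs_center_lt_one k) (abs_radius_lt_one k))
      (abs_radius_lt_one (k + 1))
    rw [center, abs_lt]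
    constructor <;> linarith [h.1, h.2]

theorem abs_neg_center_lt_one (k : ℕ) : |-center k| < 1 := by
  rw [abs_neg]
  exact abs_center_lt_one k

theorem abs_realMobius_center_radius_lt_one (k : ℕ) : |realMobius (center k) (radius k)| < 1 :=
  abs_realMobius_lt_one (abs_center_lt_one k) (abs_radius_lt_one k)

theorem realMobius_lt_realMobius_succ (k : ℕ) :
    realMobius (center k) (radius k) < realMobius (center (k + 1)) (-radius (k + 1)) := by
  have h := abs_lt.1 <| abs_realMobius_lt_one
    (abs_realMobius_center_radius_lt_one k) (abs_radius_lt_one (k + 1))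
  refine lt_realMobius_neg_of_realMobius_lt
    (abs_realMobius_center_radius_lt_one k) (abs_radius_lt_one (k + 1))
    (abs_lt.1 (abs_center_lt_one (k + 1))).2 ?_
  rw [center]
  linarith [h.2]

theorem realMobius_lt_realMobius_of_lt {k l : ℕ} (hkl : k < l) :
    realMobius (center k) (radius k) < realMobius (center l) (-radius l) := by
  induction l, hkl using Nat.le_induction with
  | base => exact realMobius_lt_realMobius_succ k
  | succ l _ ih =>
    exact ih.trans <| (realMobius_neg_lt_realMobius (abs_center_lt_one l) (radius_pos l)
      (radius_lt_one l)).trans (realMobius_lt_realMobius_succ l)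

def chart (k : ℕ) : ℂ → ℂ := mobius (center k)

def piece (k : ℕ) : Set ℂ := chart k '' ball 0 (radius k)

theorem piece_eq_diameterDisk (k : ℕ) : piece k =
    diameterDisk (realMobius (center k) (-radius k)) (realMobius (center k) (radius k)) :=
  mobius_image_ball (abs_center_lt_one k) (radius_pos k) (radius_lt_one k)

theorem isOpen_piece (k : ℕ) : IsOpen (piece k) := by
  rw [piece_eq_diameterDisk]
  exact isOpen_ball

theorem convex_piece (k : ℕ) : Convex ℝ (piece k) := by
  rw [piece_eq_diameterDisk]
  exact convex_ball _ _

theorem isCompact_closure_piece (k : ℕ) : IsCompact (closure (piece k)) := by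
  rw [piece_eq_diameterDisk]
  exact isBounded_ball.isCompact_closure

theorem closure_piece_subset_ball (k : ℕ) : closure (piece k) ⊆ ball 0 1 := by
  rw [piece_eq_diameterDisk]
  have hr : |-radius k| < 1 := by
    rw [abs_neg]
    exact abs_radius_lt_one k
  exact closure_diameterDisk_subset_ball
    (abs_lt.1 (abs_realMobius_lt_one (abs_center_lt_one k) hr)).1
    (abs_lt.1 (abs_realMobius_center_radius_lt_one k)).2

theorem pairwise_disjoint_closure_piece : Pairwise (Disjoint on fun k => closure (piece k)) :=
  (pairwise_disjoint_on _).2 fun k l hkl => by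
    rw [piece_eq_diameterDisk, piece_eq_diameterDisk]
    exact disjoint_closure_diameterDisk (realMobius_lt_realMobius_of_lt hkl)

theorem pairwise_disjoint_piece : Pairwise (Disjoint on piece) := fun _ _ hkl =>
  (pairwise_disjoint_closure_piece hkl).mono subset_closure subset_closure

def pieceMap (k : ℕ) (z : ℂ) : ℂ := chart (k + 1) (mobius (-center k) z / radius k)

def pieceInv (k : ℕ) (w : ℂ) : ℂ := chart k (radius k * mobius (-center (k + 1)) w)

theorem mapsTo_mobius_neg_piece (k : ℕ) :
    MapsTo (mobius (-center k)) (piece k) (ball 0 (radius k)) := by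
  rintro _ ⟨y, hy, rfl⟩
  rwa [chart, mobius_neg_mobius (abs_center_lt_one k)
    ((mem_ball_zero_iff.1 hy).trans (radius_lt_one k))]

theorem div_radius_mem_ball {k : ℕ} {y : ℂ} (hy : y ∈ ball 0 (radius k)) :
    y / radius k ∈ ball 0 1 := by
  rw [mem_ball_zero_iff, norm_div, Complex.norm_real, Real.norm_of_nonneg (radius_pos k).le,
    div_lt_one (radius_pos k)]
  exact mem_ball_zero_iff.1 hy

theorem radius_mul_mem_ball {k : ℕ} {u : ℂ} (hu : u ∈ ball 0 1) :
    radius k * u ∈ ball 0 (radius k) := by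
  rw [mem_ball_zero_iff, norm_mul, Complex.norm_real, Real.norm_of_nonneg (radius_pos k).le]
  exact mul_lt_of_lt_one_right (radius_pos k) (mem_ball_zero_iff.1 hu)

theorem pieceMap_chart {k : ℕ} {y : ℂ} (hy : y ∈ ball 0 (radius k)) :
    pieceMap k (chart k y) = chart (k + 1) (y / radius k) := by
  simp only [pieceMap, chart]
  rw [mobius_neg_mobius (abs_center_lt_one k)
    ((mem_ball_zero_iff.1 hy).trans (radius_lt_one k))]

theorem mapsTo_pieceMap (k : ℕ) : MapsTo (pieceMap k) (piece k) (ball 0 1) := fun _ hz =>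
  mapsTo_mobius (abs_center_lt_one (k + 1)) (div_radius_mem_ball (mapsTo_mobius_neg_piece k hz))

theorem mapsTo_pieceInv (k : ℕ) : MapsTo (pieceInv k) (ball 0 1) (piece k) := fun _ hw =>
  mem_image_of_mem _ <| radius_mul_mem_ball <|
    mapsTo_mobius (abs_neg_center_lt_one (k + 1)) hw

theorem invOn_pieceMap (k : ℕ) : InvOn (pieceInv k) (pieceMap k) (piece k) (ball 0 1) := by
  have hr : (radius k : ℂ) ≠ 0 := Complex.ofReal_ne_zero.2 (radius_pos k).ne'
  constructor
  · rintro _ ⟨y, hy, rfl⟩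
    rw [pieceMap_chart hy, pieceInv]
    unfold chart
    rw [(invOn_mobius (abs_center_lt_one (k + 1))).1 (div_radius_mem_ball hy), mul_div_cancel₀ _ hr]
  · intro w hw
    have hu := mapsTo_mobius (abs_neg_center_lt_one (k + 1)) hw
    rw [pieceInv, pieceMap_chart (radius_mul_mem_ball hu), mul_div_cancel_left₀ _ hr]
    exact (invOn_mobius (abs_center_lt_one (k + 1))).2 hw

theorem differentiableOn_pieceMap (k : ℕ) : DifferentiableOn ℂ (pieceMap k) (piece k) :=
  (differentiableOn_mobius (abs_center_lt_one (k + 1)).le).comp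
    (((differentiableOn_mobius (abs_neg_center_lt_one k).le).mono
      (subset_closure.trans (closure_piece_subset_ball k))).div_const _)
    fun _ hz => div_radius_mem_ball (mapsTo_mobius_neg_piece k hz)

theorem differentiableOn_pieceInv (k : ℕ) : DifferentiableOn ℂ (pieceInv k) (ball 0 1) :=
  (differentiableOn_mobius (abs_center_lt_one k).le).comp
    ((differentiableOn_mobius (abs_neg_center_lt_one (k + 1)).le).const_mul _)
    fun _ hw => ball_subset_ball (radius_lt_one k).le <| radius_mul_mem_ball <|
      mapsTo_mobius (abs_neg_center_lt_one (k + 1)) hw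

theorem div_prod_radius_mem_ball {x : ℂ} (hx : x ∈ ball 0 (1 / 2)) (n : ℕ) :
    x / ∏ i ∈ Finset.range n, (radius i : ℂ) ∈ ball 0 (radius n) := by
  have hP : 0 < ∏ i ∈ Finset.range n, radius i := by linarith [half_lt_prod_radius n]
  rw [← Complex.ofReal_prod, mem_ball_zero_iff, norm_div, Complex.norm_real,
    Real.norm_of_nonneg hP.le, div_lt_iff₀ hP, mul_comm, ← Finset.prod_range_succ]
  exact (mem_ball_zero_iff.1 hx).trans (half_lt_prod_radius (n + 1))

theorem iterate_eq_of_step {F : ℂ → ℂ}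
    (hF : ∀ k, ∀ y ∈ ball 0 (radius k), F (chart k y) = chart (k + 1) (y / radius k)) {x : ℂ}
    (hx : x ∈ ball 0 (1 / 2)) (n : ℕ) :
    F^[n] x = chart n (x / ∏ i ∈ Finset.range n, (radius i : ℂ)) := by
  induction n with
  | zero => simp [chart, center, mobius_zero]
  | succ n ih =>
    rw [Function.iterate_succ_apply', ih, hF n _ (div_prod_radius_mem_ball hx n),
      Finset.prod_range_succ, div_div]

theorem image_iterate_subset_piece {F : ℂ → ℂ}
    (hF : ∀ k, ∀ y ∈ ball 0 (radius k), F (chart k y) = chart (k + 1) (y / radius k)) (n : ℕ) :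
    F^[n] '' ball 0 (1 / 2) ⊆ piece n := by
  rintro _ ⟨x, hx, rfl⟩
  rw [iterate_eq_of_step hF hx]
  exact mem_image_of_mem _ (div_prod_radius_mem_ball hx n)

end WanderingDisk

open WanderingDisk

/-- A complex box mapping with a wandering disk: `𝒱 = 𝔻`, every component of `𝒰` is
compactly contained in `𝔻`, and the disk `W = 𝔻_{1/2}` has pairwise disjoint forward
images. Concretely, `𝒰 = ⋃ₖ gₖ(𝔻_{aₖ})` for real Möbius automorphisms `gₖ` of `𝔻` with
pairwise disjoint images `gₖ(𝔻_{aₖ})`, `F(gₖ(y)) = g_{k+1}(y/aₖ)`, `∏ aᵢ = 1/2`, and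
`F^n(x) = gₙ(x/(a₀⋯a_{n-1}))` on `W`, so `F^n(W) ⊆ gₙ(𝔻_{aₙ})`. (Indexing from `0`,
with `g 0 = id`.) -/
theorem stmt_15 :
    ∃ (B : ComplexBoxMapping) (a : ℕ → ℝ) (g : ℕ → ℂ → ℂ),
      B.V = Metric.ball (0 : ℂ) 1 ∧
      (∀ x ∈ B.U, IsCompact (closure (connectedComponentIn B.U x)) ∧
        closure (connectedComponentIn B.U x) ⊆ Metric.ball (0 : ℂ) 1) ∧
      (∀ i, a i ∈ Set.Ioo (0 : ℝ) 1) ∧ Monotone a ∧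
      Tendsto a atTop (nhds 1) ∧
      Tendsto (fun n => ∏ i ∈ Finset.range n, a i) atTop (nhds (1 / 2)) ∧
      g 0 = id ∧
      (∀ k, DifferentiableOn ℂ (g k) (Metric.ball 0 1) ∧
        Set.InjOn (g k) (Metric.ball 0 1) ∧
        g k '' Metric.ball (0 : ℂ) 1 = Metric.ball (0 : ℂ) 1 ∧
        ∀ y ∈ Metric.ball (0 : ℂ) 1, y.im = 0 → (g k y).im = 0) ∧
      (∀ k l, k ≠ l →
        Disjoint (g k '' Metric.ball (0 : ℂ) (a k)) (g l '' Metric.ball (0 : ℂ) (a l))) ∧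
      B.U = ⋃ k : ℕ, g k '' Metric.ball (0 : ℂ) (a k) ∧
      (∀ k, ∀ y ∈ Metric.ball (0 : ℂ) (a k),
        B.F (g k y) = g (k + 1) (y / ((a k : ℝ) : ℂ))) ∧
      (∀ n : ℕ, ∀ x ∈ Metric.ball (0 : ℂ) (1 / 2),
        B.F^[n] x = g n (x / (∏ i ∈ Finset.range n, ((a i : ℝ) : ℂ)))) ∧
      (∀ n : ℕ, B.F^[n] '' Metric.ball (0 : ℂ) (1 / 2) ⊆
        g n '' Metric.ball (0 : ℂ) (a n)) ∧
      (∀ n m : ℕ, n ≠ m →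
        Disjoint (B.F^[n] '' Metric.ball (0 : ℂ) (1 / 2))
          (B.F^[m] '' Metric.ball (0 : ℂ) (1 / 2))) := by
  obtain ⟨B, hU, hV, hF⟩ := ComplexBoxMapping.exists_of_pieces isOpen_ball (convex_ball 0 1)
    isOpen_piece convex_piece isCompact_closure_piece closure_piece_subset_ball
    pairwise_disjoint_closure_piece differentiableOn_pieceMap differentiableOn_pieceInv
    mapsTo_pieceMap mapsTo_pieceInv invOn_pieceMap
  have hstep (k : ℕ) (y : ℂ) (hy : y ∈ ball 0 (radius k)) :
      B.F (chart k y) = chart (k + 1) (y / radius k) :=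
    (hF k (mem_image_of_mem _ hy)).trans (pieceMap_chart hy)
  refine ⟨B, radius, chart, hV, ?_, fun i => ⟨radius_pos i, radius_lt_one i⟩, monotone_radius,
    tendsto_radius, tendsto_prod_radius, mobius_zero, fun k => ?_, pairwise_disjoint_piece, hU,
    hstep, fun n x hx => iterate_eq_of_step hstep hx n, image_iterate_subset_piece hstep,
    fun n m hnm => (pairwise_disjoint_piece hnm).mono (image_iterate_subset_piece hstep n)
      (image_iterate_subset_piece hstep m)⟩
  · intro x hx
    rw [hU] at hx ⊢
    obtain ⟨k, hk⟩ := mem_iUnion.1 hx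
    rw [connectedComponentIn_iUnion_eq pairwise_disjoint_piece isOpen_piece
      (convex_piece k).isPreconnected hk]
    exact ⟨isCompact_closure_piece k, closure_piece_subset_ball k⟩
  · have hbij := bijOn_mobius (abs_center_lt_one k)
    exact ⟨differentiableOn_mobius (abs_center_lt_one k).le, hbij.injOn, hbij.image_eq,
      fun y _ => im_mobius_of_im_eq_zero _⟩
end
end
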